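/- Let X be a Hausdorff space, κ and λ infinite cardinals. Suppose X has a dense subset D with |D| ≤ κ, and every point of X has a linked local π-base of cardinality at most λ. Then |X| ≤ κ^λ. -/

import Mathlib

open Set Topology Cardinal

universe u

/-- A local π-base at `p`: a family of nonempty open sets such that every open
set containing `p` contains a member of the family. -/
def IsLocalPiBase {X : Type u} [TopologicalSpace X] (p : X) (𝓑 : Set (Set X)) : Prop :=
  (∀ b ∈ 𝓑, IsOpen b ∧ b.Nonempty) ∧
  ∀ U : Set X, IsOpen U → p ∈ U → ∃ b ∈ 𝓑, b ⊆ U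

/-- A family of sets is centered if it has the finite intersection property. -/
def Centered {X : Type u} (𝓑 : Set (Set X)) : Prop :=
  ∀ F : Finset (Set X), F.Nonempty → ↑F ⊆ 𝓑 → (⋂₀ (F : Set (Set X))).Nonempty

/-- A family of sets is linked if any two members meet. -/
def Linked {X : Type u} (𝓑 : Set (Set X)) : Prop :=
  ∀ b₁ ∈ 𝓑, ∀ b₂ ∈ 𝓑, (b₁ ∩ b₂).Nonempty

/-- A decreasing local π-base at `p`, given as a ⊆-decreasing sequence of
nonempty open sets. -/
def IsDecreasingLocalPiBase {X : Type u} [TopologicalSpace X] (p : X) (A : ℕ → Set X) : Prop :=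
  (∀ n, IsOpen (A n) ∧ (A n).Nonempty) ∧
  (∀ n, A (n + 1) ⊆ A n) ∧
  ∀ U : Set X, IsOpen U → p ∈ U → ∃ n, A n ⊆ U

/-- A cellular family: pairwise disjoint nonempty open sets. -/
def IsCellular {X : Type u} [TopologicalSpace X] (𝓒 : Set (Set X)) : Prop :=
  (∀ c ∈ 𝓒, IsOpen c ∧ c.Nonempty) ∧ 𝓒.PairwiseDisjoint id

/-- A weak closed pseudobase at `p`: a family of open sets whose closures
intersect exactly in `{p}`. -/
def IsWeakClosedPseudobase {X : Type u} [TopologicalSpace X] (p : X) (𝓑 : Set (Set X)) : Prop :=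
  (∀ b ∈ 𝓑, IsOpen b) ∧ (⋂ b ∈ 𝓑, closure b) = {p}

/-- A neighborhood base at `p` consisting of open sets containing `p`. -/
def IsNhdBase {X : Type u} [TopologicalSpace X] (p : X) (𝓑 : Set (Set X)) : Prop :=
  (∀ b ∈ 𝓑, IsOpen b ∧ p ∈ b) ∧
  ∀ U : Set X, IsOpen U → p ∈ U → ∃ b ∈ 𝓑, b ⊆ U

/-! Enumerate the linked local π-base at every point by one index set `ι` of size `λ`, and for
each pair `(i, j)` choose a point of `D` in the intersection of the `i`-th and `j`-th members.
This map `X → (ι × ι → D)` is injective: if `p ≠ q` have disjoint neighbourhoods `U ∋ p` and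
`V ∋ q`, pick `i` with the `i`-th member at `p` inside `U` and `j` with the `j`-th member at `q`
inside `V`; the point chosen for `p` at `(i, j)` lies in `U`, the one chosen for `q` in `V`.
Hence `|X| ≤ |D| ^ (λ · λ) = |D| ^ λ ≤ κ ^ λ`. -/

open Function

lemma Set.Nonempty.exists_range_eq_of_mk_le {α ι : Type u} {S : Set α} (hS : S.Nonempty)
    (h : #S ≤ #ι) : ∃ s : ι → α, range s = S := by
  obtain ⟨f⟩ := h
  have := hS.to_subtype
  refine ⟨Subtype.val ∘ invFun f, ?_⟩
  rw [range_comp, (invFun_surjective f.injective).range_eq, image_univ, Subtype.range_coe]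

section

variable {X : Type u} [TopologicalSpace X]

lemma IsLocalPiBase.nonempty {p : X} {𝓑 : Set (Set X)} (h : IsLocalPiBase p 𝓑) : 𝓑.Nonempty :=
  let ⟨b, hb, _⟩ := h.2 univ isOpen_univ (mem_univ p)
  ⟨b, hb⟩

theorem injective_of_mem_inter_localPiBase [T2Space X] {ι : Type*} {s : X → ι → Set X}
    (hs : ∀ p, IsLocalPiBase p (range (s p))) {g : X → ι → ι → X}
    (hg : ∀ p i j, g p i j ∈ s p i ∩ s p j) : Injective g := by
  intro p q hpq
  by_contra hne
  obtain ⟨U, V, hU, hV, hpU, hqV, hUV⟩ := t2_separation hne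
  obtain ⟨_, ⟨i, rfl⟩, hiU⟩ := (hs p).2 U hU hpU
  obtain ⟨_, ⟨j, rfl⟩, hjV⟩ := (hs q).2 V hV hqV
  have hpU' : g p i j ∈ U := hiU (hg p i j).1
  have hqV' : g p i j ∈ V := hpq ▸ hjV (hg q i j).2
  exact hUV.ne_of_mem hpU' hqV' rfl

theorem mk_le_mk_dense_pow_of_linked [T2Space X] {D : Set X} (hD : Dense D) {ι : Type u}
    {s : X → ι → Set X} (hs : ∀ p, IsLocalPiBase p (range (s p)))
    (hl : ∀ p, Linked (range (s p))) : #X ≤ #D ^ #(ι × ι) := by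
  have hmeet : ∀ p i j, (s p i ∩ s p j ∩ D).Nonempty := fun p i j =>
    hD.inter_open_nonempty _ (((hs p).1 _ ⟨i, rfl⟩).1.inter ((hs p).1 _ ⟨j, rfl⟩).1)
      (hl p _ ⟨i, rfl⟩ _ ⟨j, rfl⟩)
  choose g hg using hmeet
  rw [power_def]
  refine mk_le_of_injective (f := fun p ij => (⟨g p ij.1 ij.2, (hg p ij.1 ij.2).2⟩ : D)) ?_
  intro p q hpq
  refine injective_of_mem_inter_localPiBase hs (fun p i j => (hg p i j).1) ?_
  funext i j
  exact congrArg Subtype.val (congrFun hpq (i, j))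

end

theorem card_le_density_pow_linkedPiChar_general
    {X : Type u} [TopologicalSpace X] [T2Space X] (κ lam : Cardinal.{u})
    (hlam : ℵ₀ ≤ lam)
    (hD : ∃ D : Set X, Dense D ∧ #D ≤ κ)
    (hπ : ∀ p : X, ∃ 𝓑 : Set (Set X), IsLocalPiBase p 𝓑 ∧ Linked 𝓑 ∧ #𝓑 ≤ lam) :
    #X ≤ κ ^ lam := by
  obtain ⟨D, hDense, hDκ⟩ := hD
  have hindexed : ∀ p : X, ∃ s : lam.out → Set X, IsLocalPiBase p (range s) ∧ Linked (range s) :=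
    fun p =>
      let ⟨𝓑, hbase, hlinked, hcard⟩ := hπ p
      let ⟨s, hs⟩ := hbase.nonempty.exists_range_eq_of_mk_le (hcard.trans_eq (mk_out lam).symm)
      ⟨s, hs ▸ hbase, hs ▸ hlinked⟩
  choose s hs hl using hindexed
  calc #X ≤ #D ^ #(lam.out × lam.out) := mk_le_mk_dense_pow_of_linked hDense hs hl
    _ = #D ^ lam := by rw [mk_prod, lift_id, mk_out, mul_eq_self hlam]
    _ ≤ κ ^ lam := power_le_power_right hDκ

/-- if a Hausdorff space has a dense set of cardinality ≤ κ and every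
point has a linked local π-base of cardinality ≤ λ, then |X| ≤ κ^λ. -/
theorem card_le_density_pow_linkedPiChar
    {X : Type u} [TopologicalSpace X] [T2Space X] (κ lam : Cardinal.{u})
    (hκ : ℵ₀ ≤ κ) (hlam : ℵ₀ ≤ lam)
    (hD : ∃ D : Set X, Dense D ∧ #D ≤ κ)
    (hπ : ∀ p : X, ∃ 𝓑 : Set (Set X), IsLocalPiBase p 𝓑 ∧ Linked 𝓑 ∧ #𝓑 ≤ lam) :
    #X ≤ κ ^ lam :=
  card_le_density_pow_linkedPiChar_general κ lam hlam hD hπ
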